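/- arXiv:1406.3056 — 2 statements merged into one kernel-verified Lean document; each statement's English description precedes it below -/
import Mathlib

section
/- There exists a nonzero complex number z such that H = z · P_X(4π/3, 4π/3) · P_Z(4π/3, 4π/3) · P_X(4π/3, 4π/3); that is, the qutrit Hadamard gate admits an Euler decomposition into X- and Z-phase gates, up to a nonzero global scalar. -/
open scoped Matrix ComplexConjugate

/-- ω = exp(2πi/3). -/
noncomputable def qutritOmega : ℂ := Complex.exp (2 * Real.pi * Complex.I / 3)

/-- The qutrit Hadamard gate, H_{jk} = ω^{jk}. -/
noncomputable def qutritH : Matrix (Fin 3) (Fin 3) ℂ :=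
  Matrix.of fun j k => qutritOmega ^ ((j : ℕ) * (k : ℕ))

/-- The Z-phase gate P_Z(α,β) = diag(1, e^{iα}, e^{iβ}). -/
noncomputable def PZ (α β : ℝ) : Matrix (Fin 3) (Fin 3) ℂ :=
  Matrix.diagonal ![1, Complex.exp (α * Complex.I), Complex.exp (β * Complex.I)]

/-- The X-phase gate P_X(α,β) = H · P_Z(α,β) · H⁻¹. -/
noncomputable def PX (α β : ℝ) : Matrix (Fin 3) (Fin 3) ℂ :=
  qutritH * PZ α β * qutritH⁻¹

lemma w3 : qutritOmega ^ 3 = 1 := by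
  rw [qutritOmega, ← Complex.exp_nat_mul]
  rw [show ((3 : ℕ) : ℂ) * (2 * (Real.pi : ℂ) * Complex.I / 3) = 2 * Real.pi * Complex.I by
    push_cast; ring]
  exact Complex.exp_two_pi_mul_I

lemma wne1 : qutritOmega ≠ 1 := by
  intro h
  rw [qutritOmega, Complex.exp_eq_one_iff] at h
  obtain ⟨n, hn⟩ := h
  have hπ : (Real.pi : ℂ) ≠ 0 := by exact_mod_cast Real.pi_ne_zero
  have hz : (2 : ℂ) * Real.pi * Complex.I ≠ 0 := by
    simp [hπ, Complex.I_ne_zero]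
  have h2 : (1 : ℂ) * (2 * Real.pi * Complex.I) = ((n : ℂ) * 3) * (2 * Real.pi * Complex.I) := by
    linear_combination (3 : ℂ) * hn
  have h3 : (1 : ℂ) = (n : ℂ) * 3 := mul_right_cancel₀ hz h2
  have h4 : (1 : ℤ) = n * 3 := by exact_mod_cast h3
  omega

lemma wsum : 1 + qutritOmega + qutritOmega ^ 2 = 0 := by
  have h : (qutritOmega - 1) * (1 + qutritOmega + qutritOmega ^ 2) = 0 := by
    linear_combination w3
  rcases mul_eq_zero.1 h with h1 | h2
  · exact absurd (sub_eq_zero.1 h1) wne1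
  · exact h2

/-- Explicit inverse of the qutrit Hadamard. -/
noncomputable def Binv : Matrix (Fin 3) (Fin 3) ℂ :=
  Matrix.of fun j k => (3 : ℂ)⁻¹ * qutritOmega ^ (2 * (j : ℕ) * (k : ℕ))

lemma hHB : qutritH * Binv = 1 := by
  ext i j
  fin_cases i <;> fin_cases j <;>
    simp [qutritH, Binv, Matrix.mul_apply, Fin.sum_univ_three, Matrix.one_apply]
  · linear_combination ((1/3 : ℂ) * qutritOmega^2 - (1/3 : ℂ) * qutritOmega + (1/3 : ℂ)) * wsum
  · linear_combination ((1/3 : ℂ) * qutritOmega^6 - (1/3 : ℂ) * qutritOmega^5 + (1/3 : ℂ) * qutritOmega^3 - (1/3 : ℂ) * qutritOmega + (1/3 : ℂ)) * wsum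
  · linear_combination ((1/3 : ℂ)) * wsum
  · linear_combination ((1/3 : ℂ) * qutritOmega^4 - (1/3 : ℂ) * qutritOmega^3 + (2/3 : ℂ) * qutritOmega - (2/3 : ℂ)) * wsum
  · linear_combination ((1/3 : ℂ) * qutritOmega^8 - (1/3 : ℂ) * qutritOmega^7 + (1/3 : ℂ) * qutritOmega^5 - (1/3 : ℂ) * qutritOmega^4 + (1/3 : ℂ) * qutritOmega^3 - (1/3 : ℂ) * qutritOmega + (1/3 : ℂ)) * wsum
  · linear_combination ((1/3 : ℂ) * qutritOmega^2 - (1/3 : ℂ) * qutritOmega + (1/3 : ℂ)) * wsum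
  · linear_combination ((1/3 : ℂ) * qutritOmega^6 - (1/3 : ℂ) * qutritOmega^5 + (1/3 : ℂ) * qutritOmega^3 - (1/3 : ℂ) * qutritOmega + (1/3 : ℂ)) * wsum
  · linear_combination ((1/3 : ℂ) * qutritOmega^10 - (1/3 : ℂ) * qutritOmega^9 + (1/3 : ℂ) * qutritOmega^7 - (1/3 : ℂ) * qutritOmega^6 + (2/3 : ℂ) * qutritOmega^4 - (2/3 : ℂ) * qutritOmega^3 + (2/3 : ℂ) * qutritOmega - (2/3 : ℂ)) * wsum

lemma hinv : qutritH⁻¹ = Binv := Matrix.inv_eq_right_inv hHB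

lemma hexp : Complex.exp ((4 * Real.pi / 3 : ℝ) * Complex.I) = qutritOmega ^ 2 := by
  rw [qutritOmega, ← Complex.exp_nat_mul]
  congr 1
  push_cast
  ring

lemma hPZ : PZ (4 * Real.pi / 3) (4 * Real.pi / 3) =
    Matrix.diagonal ![1, qutritOmega ^ 2, qutritOmega ^ 2] := by
  rw [PZ, hexp]

/-- Explicit form of PX(4π/3, 4π/3). -/
noncomputable def MX : Matrix (Fin 3) (Fin 3) ℂ :=
  Matrix.of fun j k => if j = k then (1 + 2 * qutritOmega ^ 2) / 3 else (2 + qutritOmega) / 3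

lemma hPX : PX (4 * Real.pi / 3) (4 * Real.pi / 3) = MX := by
  rw [PX, hPZ, hinv]
  ext i j
  fin_cases i <;> fin_cases j <;>
    simp [qutritH, Binv, MX, Matrix.mul_apply, Fin.sum_univ_three, Matrix.diagonal]
  · ring
  · linear_combination ((1/3 : ℂ) * qutritOmega^4 - (1/3 : ℂ) * qutritOmega^3 + (1/3 : ℂ) * qutritOmega^2 - (1/3 : ℂ)) * wsum
  · linear_combination ((1/3 : ℂ) * qutritOmega^8 - (1/3 : ℂ) * qutritOmega^7 + (1/3 : ℂ) * qutritOmega^5 - (1/3 : ℂ) * qutritOmega^3 + (1/3 : ℂ) * qutritOmega^2 - (1/3 : ℂ)) * wsum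
  · linear_combination ((1/3 : ℂ) * qutritOmega^2 - (1/3 : ℂ)) * wsum
  · linear_combination ((1/3 : ℂ) * qutritOmega^6 - (1/3 : ℂ) * qutritOmega^5 + (2/3 : ℂ) * qutritOmega^3 - (2/3 : ℂ) * qutritOmega^2) * wsum
  · linear_combination ((1/3 : ℂ) * qutritOmega^10 - (1/3 : ℂ) * qutritOmega^9 + (1/3 : ℂ) * qutritOmega^7 - (1/3 : ℂ) * qutritOmega^6 + (1/3 : ℂ) * qutritOmega^5 - (1/3 : ℂ) * qutritOmega^3 + (1/3 : ℂ) * qutritOmega^2 - (1/3 : ℂ)) * wsum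
  · linear_combination ((1/3 : ℂ) * qutritOmega^4 - (1/3 : ℂ) * qutritOmega^3 + (1/3 : ℂ) * qutritOmega^2 - (1/3 : ℂ)) * wsum
  · linear_combination ((1/3 : ℂ) * qutritOmega^8 - (1/3 : ℂ) * qutritOmega^7 + (1/3 : ℂ) * qutritOmega^5 - (1/3 : ℂ) * qutritOmega^3 + (1/3 : ℂ) * qutritOmega^2 - (1/3 : ℂ)) * wsum
  · linear_combination ((1/3 : ℂ) * qutritOmega^12 - (1/3 : ℂ) * qutritOmega^11 + (1/3 : ℂ) * qutritOmega^9 - (1/3 : ℂ) * qutritOmega^8 + (2/3 : ℂ) * qutritOmega^6 - (2/3 : ℂ) * qutritOmega^5 + (2/3 : ℂ) * qutritOmega^3 - (2/3 : ℂ) * qutritOmega^2) * wsum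

lemma wne0 : qutritOmega ≠ 0 := Complex.exp_ne_zero _

/-- The qutrit Hadamard gate admits an Euler decomposition
    H = z · P_X(4π/3, 4π/3) · P_Z(4π/3, 4π/3) · P_X(4π/3, 4π/3)
    for some nonzero global scalar z. -/
theorem hadamard_euler_decomposition :
    ∃ z : ℂ, z ≠ 0 ∧
      qutritH = z • (PX (4 * Real.pi / 3) (4 * Real.pi / 3) *
        PZ (4 * Real.pi / 3) (4 * Real.pi / 3) *
        PX (4 * Real.pi / 3) (4 * Real.pi / 3)) := by
  refine ⟨qutritOmega - qutritOmega ^ 2, ?_, ?_⟩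
  · intro h
    have h1 : qutritOmega * (1 - qutritOmega) = 0 := by linear_combination h
    rcases mul_eq_zero.1 h1 with h2 | h2
    · exact wne0 h2
    · exact wne1 (sub_eq_zero.1 h2).symm
  · rw [hPX, hPZ]
    ext i j
    fin_cases i <;> fin_cases j <;>
      simp [qutritH, MX, Matrix.mul_apply, Fin.sum_univ_three, Matrix.diagonal,
        Matrix.smul_apply]
    · linear_combination ((2/3 : ℂ) * qutritOmega^4 - (4/9 : ℂ) * qutritOmega^3 + (2/9 : ℂ) * qutritOmega^2 - (10/9 : ℂ) * qutritOmega + (1 : ℂ)) * wsum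
    · linear_combination ((2/9 : ℂ) * qutritOmega^5 + (1/9 : ℂ) * qutritOmega^4 - (1/9 : ℂ) * qutritOmega^3 + (1/3 : ℂ) * qutritOmega^2 - (11/9 : ℂ) * qutritOmega + (1 : ℂ)) * wsum
    · linear_combination ((2/9 : ℂ) * qutritOmega^5 + (1/9 : ℂ) * qutritOmega^4 - (1/9 : ℂ) * qutritOmega^3 + (1/3 : ℂ) * qutritOmega^2 - (11/9 : ℂ) * qutritOmega + (1 : ℂ)) * wsum
    · linear_combination ((2/9 : ℂ) * qutritOmega^5 + (1/9 : ℂ) * qutritOmega^4 - (1/9 : ℂ) * qutritOmega^3 + (1/3 : ℂ) * qutritOmega^2 - (11/9 : ℂ) * qutritOmega + (1 : ℂ)) * wsum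
    · linear_combination ((4/9 : ℂ) * qutritOmega^6 - (8/9 : ℂ) * qutritOmega^5 + (1 : ℂ) * qutritOmega^4 - (2/9 : ℂ) * qutritOmega^3 - (5/9 : ℂ) * qutritOmega^2 + (5/9 : ℂ) * qutritOmega) * wsum
    · linear_combination ((4/9 : ℂ) * qutritOmega^5 - (10/9 : ℂ) * qutritOmega^3 + (13/9 : ℂ) * qutritOmega^2 - (4/9 : ℂ) * qutritOmega) * wsum
    · linear_combination ((2/9 : ℂ) * qutritOmega^5 + (1/9 : ℂ) * qutritOmega^4 - (1/9 : ℂ) * qutritOmega^3 + (1/3 : ℂ) * qutritOmega^2 - (11/9 : ℂ) * qutritOmega + (1 : ℂ)) * wsum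
    · linear_combination ((4/9 : ℂ) * qutritOmega^5 - (10/9 : ℂ) * qutritOmega^3 + (13/9 : ℂ) * qutritOmega^2 - (4/9 : ℂ) * qutritOmega) * wsum
    · linear_combination ((4/9 : ℂ) * qutritOmega^6 - (8/9 : ℂ) * qutritOmega^5 + (1 : ℂ) * qutritOmega^4 - (2/9 : ℂ) * qutritOmega^3 + (4/9 : ℂ) * qutritOmega^2 - (4/9 : ℂ) * qutritOmega) * wsum
end

section
/- Let d > 2 and let b ∈ ℂ^d be the unit vector with b₁ = b₂ = 1/√2 and all other entries 0. Then for every c : Fin d → ℂ with Σ_k c_k = d and every θ ∈ ℝ, the circulant matrix M with entries M_{jk} = c_{(j−k) mod d}/d satisfies M·b ≠ e^{iθ} · e_{d−1}, where e_{d−1} is the standard basis vector supported at index d−1. Hence the Z_d phase gate sending b to |d−1⟩ cannot be realized by any Λ_X phase gate, even up to a global phase. -/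
/-!
Every column of `Λ_X(c)` sums to `(∑ c) / d = 1`, so `Λ_X(c)` preserves the sum of the entries
of a vector. The entries of `b` sum to `2 / √2 = √2`, whereas those of `e^{iθ} e_{d-1}` sum to
`e^{iθ}`, which has modulus `1`.
-/

open scoped Matrix
open Finset

/-- The circulant matrix Λ_X(c) with entries M_{jk} = c_{(j−k) mod d} / d
    (subtraction in `Fin d` is subtraction mod d). -/
noncomputable def lambdaX (d : ℕ) (c : Fin d → ℂ) : Matrix (Fin d) (Fin d) ℂ :=
  Matrix.of fun j k => c (j - k) / d

theorem one_vecMul_lambdaX (d : ℕ) [NeZero d] (c : Fin d → ℂ) :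
    (fun _ => 1) ᵥ* lambdaX d c = fun _ => (∑ k, c k) / d := by
  funext k
  simp only [Matrix.vecMul, dotProduct, one_mul, lambdaX, Matrix.of_apply, ← Finset.sum_div]
  exact congrArg (· / _) ((Equiv.subRight k).sum_comp c)

theorem sum_mulVec_lambdaX (d : ℕ) [NeZero d] (c v : Fin d → ℂ) :
    ∑ j, (lambdaX d c *ᵥ v) j = (∑ k, c k) / d * ∑ k, v k := by
  simpa [one_vecMul_lambdaX, dotProduct, Finset.mul_sum] using
    Matrix.dotProduct_mulVec (fun _ => (1 : ℂ)) (lambdaX d c) v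

theorem Fin.sum_ite_val_eq_one_or_two {M : Type*} [AddCommMonoid M] {d : ℕ} (hd : 2 < d)
    (a : M) : ∑ i : Fin d, (if (i : ℕ) = 1 ∨ (i : ℕ) = 2 then a else 0) = 2 • a := by
  rw [Fin.sum_univ_eq_sum_range (fun i => if i = 1 ∨ i = 2 then a else 0), ← Finset.sum_filter,
    show (range d).filter (fun i => i = 1 ∨ i = 2) = {1, 2} by ext i; simp; omega]
  simp

theorem Fin.sum_ite_val_eq_sub_one {M : Type*} [AddCommMonoid M] {d : ℕ} [NeZero d] (a : M) :
    ∑ i : Fin d, (if (i : ℕ) = d - 1 then a else 0) = a := by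
  rw [Fin.sum_univ_eq_sum_range (fun i => if i = d - 1 then a else 0), sum_ite_eq']
  simp [NeZero.pos d]

/-- Let d > 2 and b be the unit vector with b₁ = b₂ = 1/√2 and all other entries 0.
    For every c with Σ c_k = d and every θ, the circulant matrix Λ_X(c) does not map
    b to e^{iθ}·e_{d−1}: the Z_d gate sending b to |d−1⟩ is not realizable by any
    Λ_X phase gate, even up to a global phase. -/
theorem Zd_phase_gate_not_realizable_by_lambdaX (d : ℕ) (hd : 2 < d)
    (c : Fin d → ℂ) (hc : (∑ k, c k) = (d : ℂ)) (θ : ℝ) :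
    (lambdaX d c).mulVec
        (fun i => if (i : ℕ) = 1 ∨ (i : ℕ) = 2 then ((1 / Real.sqrt 2 : ℝ) : ℂ) else 0)
      ≠ fun (j : Fin d) => if (j : ℕ) = d - 1 then Complex.exp (θ * Complex.I) else 0 := by
  intro h
  have : NeZero d := ⟨by omega⟩
  have hsum := congrArg (fun v => ‖∑ j, v j‖) h
  simp only [sum_mulVec_lambdaX, hc, div_self (NeZero.ne (d : ℂ)), one_mul,
    Fin.sum_ite_val_eq_one_or_two hd, Fin.sum_ite_val_eq_sub_one,
    Complex.norm_exp_ofReal_mul_I] at hsum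
  rw [two_nsmul, ← Complex.ofReal_add, ← add_div, one_add_one_eq_two, Real.div_sqrt,
    Complex.norm_real, Real.norm_of_nonneg (Real.sqrt_nonneg 2), Real.sqrt_eq_one] at hsum
  norm_num at hsum
end
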